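/- Let A be a Banach algebra whose bidual A** has a mixed unit e'', let B be a Banach A-bimodule with actions π_ℓ, π_r such that Z_{e''}(π_r^t) = B**, and let (e_α) be a bounded approximate identity of A with e_α → e'' in the weak* topology of A**. Then e'' is a right unit A**-module for B** (π_r***(b'', e'') = b'' for every b'' ∈ B**) if and only if (e_α) is a weak* right approximate identity A**-module for B**, i.e. π_r***(b'', e_α) → b'' in the weak* topology for every b'' ∈ B**. -/

import Mathlib

open Filter Topology ContinuousLinearMap NormedSpace

set_option maxSynthPendingDepth 3

noncomputable section

variable {X Y Z W E F : Type*}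
  [NormedAddCommGroup X] [NormedSpace ℂ X]
  [NormedAddCommGroup Y] [NormedSpace ℂ Y]
  [NormedAddCommGroup Z] [NormedSpace ℂ Z]
  [NormedAddCommGroup E] [NormedSpace ℂ E]
  [NormedAddCommGroup F] [NormedSpace ℂ F]

/-- The (first) Arens adjoint `m* : Z* × X → Y*` of a bounded bilinear map
`m : X × Y → Z`, characterized by `⟨m*(z',x), y⟩ = ⟨z', m(x,y)⟩`. -/
noncomputable def arensAdj (m : X →L[ℂ] Y →L[ℂ] Z) :
    StrongDual ℂ Z →L[ℂ] X →L[ℂ] StrongDual ℂ Y :=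
  ((ContinuousLinearMap.compL ℂ Y Z ℂ).flip.comp m).flip

/-- The Arens triple adjoint `m*** : X** × Y** → Z**`. -/
noncomputable def arensExt (m : X →L[ℂ] Y →L[ℂ] Z) :
    StrongDual ℂ (StrongDual ℂ X) →L[ℂ] StrongDual ℂ (StrongDual ℂ Y) →L[ℂ] StrongDual ℂ (StrongDual ℂ Z) :=
  arensAdj (arensAdj (arensAdj m))

/-- A map between dual spaces is weak*-weak* continuous. -/
def IsWeakStarCont (f : StrongDual ℂ E → StrongDual ℂ F) : Prop :=
  Continuous fun x : WeakDual ℂ E =>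
    StrongDual.toWeakDual (f (WeakDual.toStrongDual x))

/-- First topological center of a bounded bilinear map. -/
def arensZ1 (m : X →L[ℂ] Y →L[ℂ] Z) : Set (StrongDual ℂ (StrongDual ℂ X)) :=
  {x'' | IsWeakStarCont fun y'' => arensExt m x'' y''}

/-- Second topological center of a bounded bilinear map. -/
def arensZ2 (m : X →L[ℂ] Y →L[ℂ] Z) : Set (StrongDual ℂ (StrongDual ℂ Y)) :=
  {y'' | IsWeakStarCont fun x'' => arensExt m.flip y'' x''}

/-- `m` is Arens regular when `m*** = m^{t***t}`. -/
def ArensRegular (m : X →L[ℂ] Y →L[ℂ] Z) : Prop :=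
  arensExt m = (arensExt m.flip).flip

/-- `m` is left strongly Arens irregular when `Z₁(m)` is the canonical image of `X`. -/
def LeftStronglyArensIrregular (m : X →L[ℂ] Y →L[ℂ] Z) : Prop :=
  arensZ1 m = Set.range (NormedSpace.inclusionInDoubleDual ℂ X)

/-- `m` is right strongly Arens irregular when `Z₂(m)` is the canonical image of `Y`. -/
def RightStronglyArensIrregular (m : X →L[ℂ] Y →L[ℂ] Z) : Prop :=
  arensZ2 m = Set.range (NormedSpace.inclusionInDoubleDual ℂ Y)

/-- The adjoint `T* : F* → E*` of a bounded linear map. -/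
noncomputable def dualMap' (T : E →L[ℂ] F) : StrongDual ℂ F →L[ℂ] StrongDual ℂ E :=
  (ContinuousLinearMap.compL ℂ E F ℂ).flip T

/-- The second adjoint `T** : E** → F**` of a bounded linear map. -/
noncomputable def bidualMap (T : E →L[ℂ] F) :
    StrongDual ℂ (StrongDual ℂ E) →L[ℂ] StrongDual ℂ (StrongDual ℂ F) :=
  dualMap' (dualMap' T)

/-- A net in `A`: a function from a nonempty directed preorder to `A`. -/
structure Net (A : Type*) where
  ι : Type
  [pre : Preorder ι]
  [dir : IsDirected ι (· ≤ ·)]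
  [ne : Nonempty ι]
  e : ι → A

attribute [instance] Net.pre Net.dir Net.ne

/-- A bounded approximate identity for a (non-unital) Banach algebra. -/
def IsBAI {A : Type*} [NonUnitalNormedRing A] (N : Net A) : Prop :=
  (∃ C : ℝ, ∀ i, ‖N.e i‖ ≤ C) ∧
  (∀ a : A, Tendsto (fun i => N.e i * a) atTop (𝓝 a)) ∧
  (∀ a : A, Tendsto (fun i => a * N.e i) atTop (𝓝 a))

end

section

variable {X Y Z : Type*}
  [NormedAddCommGroup X] [NormedSpace ℂ X]
  [NormedAddCommGroup Y] [NormedSpace ℂ Y]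
  [NormedAddCommGroup Z] [NormedSpace ℂ Z]

/-- With `g := m^{t**}(x'', z') ∈ Y*`, one has `m***(x'', ι y) z' = g y` and
`m^{t***}(y'', x'') z' = y'' g`, so this is weak* convergence `y i → y''` tested at `g`. -/
theorem tendsto_arensExt_inclusionInDoubleDual (m : X →L[ℂ] Y →L[ℂ] Z)
    {ι : Type*} {l : Filter ι} (y : ι → Y) (y'' : StrongDual ℂ (StrongDual ℂ Y))
    (hy : ∀ y' : StrongDual ℂ Y, Tendsto (fun i => y' (y i)) l (𝓝 (y'' y')))
    (x'' : StrongDual ℂ (StrongDual ℂ X)) (z' : StrongDual ℂ Z) :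
    Tendsto (fun i => arensExt m x'' (inclusionInDoubleDual ℂ Y (y i)) z') l
      (𝓝 (arensExt m.flip y'' x'' z')) :=
  hy (arensAdj (arensAdj m.flip) x'' z')

end

theorem stmt_19_general {A B : Type*} [NonUnitalNormedRing A] [NormedSpace ℂ A] [NormedAddCommGroup B] [NormedSpace ℂ B]
    (πr : B →L[ℂ] A →L[ℂ] B)
    (e'' : StrongDual ℂ (StrongDual ℂ A))
    (N : Net A)
    (hlim : ∀ a' : StrongDual ℂ A, Tendsto (fun i => a' (N.e i)) atTop (𝓝 (e'' a')))
    (hZ : ∀ b'' : StrongDual ℂ (StrongDual ℂ B), arensExt πr.flip e'' b'' = arensExt πr b'' e'') :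
    (∀ b'' : StrongDual ℂ (StrongDual ℂ B), arensExt πr b'' e'' = b'') ↔
      (∀ (b'' : StrongDual ℂ (StrongDual ℂ B)) (b' : StrongDual ℂ B),
        Tendsto
          (fun i => arensExt πr b'' (NormedSpace.inclusionInDoubleDual ℂ A (N.e i)) b')
          atTop (𝓝 (b'' b'))) := by
  have hconv b'' b' : Tendsto
      (fun i => arensExt πr b'' (inclusionInDoubleDual ℂ A (N.e i)) b') atTop
      (𝓝 (arensExt πr b'' e'' b')) :=
    hZ b'' ▸ tendsto_arensExt_inclusionInDoubleDual πr N.e e'' hlim b'' b'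
  constructor
  · intro hunit b'' b'
    simpa only [hunit] using hconv b'' b'
  · intro happrox b''
    ext b'
    exact tendsto_nhds_unique (hconv b'' b') (happrox b'' b')

/-- `e''` is a right unit `A**`-module for `B**` iff `(e_α)` is a weak*
right approximate identity `A**`-module for `B**`. -/
theorem stmt_19 {A B : Type*} [NonUnitalNormedRing A] [NormedSpace ℂ A] [IsScalarTower ℂ A A] [SMulCommClass ℂ A A] [CompleteSpace A] [NormedAddCommGroup B] [NormedSpace ℂ B] [CompleteSpace B]
    (πl : A →L[ℂ] B →L[ℂ] B) (πr : B →L[ℂ] A →L[ℂ] B)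
    (hl : ∀ (a₁ a₂ : A) (b : B), πl (a₁ * a₂) b = πl a₁ (πl a₂ b))
    (hr : ∀ (b : B) (a₁ a₂ : A), πr (πr b a₁) a₂ = πr b (a₁ * a₂))
    (hc : ∀ (a₁ : A) (b : B) (a₂ : A), πr (πl a₁ b) a₂ = πl a₁ (πr b a₂))
    (e'' : StrongDual ℂ (StrongDual ℂ A))
    (hmixr : ∀ a'' : StrongDual ℂ (StrongDual ℂ A), arensExt (ContinuousLinearMap.mul ℂ A) a'' e'' = a'')
    (hmixl : ∀ a'' : StrongDual ℂ (StrongDual ℂ A),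
      arensExt (ContinuousLinearMap.mul ℂ A).flip a'' e'' = a'')
    (N : Net A) (hN : IsBAI N)
    (hlim : ∀ a' : StrongDual ℂ A, Tendsto (fun i => a' (N.e i)) atTop (𝓝 (e'' a')))
    (hZ : ∀ b'' : StrongDual ℂ (StrongDual ℂ B), arensExt πr.flip e'' b'' = arensExt πr b'' e'') :
    (∀ b'' : StrongDual ℂ (StrongDual ℂ B), arensExt πr b'' e'' = b'') ↔
      (∀ (b'' : StrongDual ℂ (StrongDual ℂ B)) (b' : StrongDual ℂ B),
        Tendsto
          (fun i => arensExt πr b'' (NormedSpace.inclusionInDoubleDual ℂ A (N.e i)) b')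
          atTop (𝓝 (b'' b'))) :=
  stmt_19_general πr e'' N hlim hZ
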